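/- Any X_O-first sd-DNNF (smooth, deterministic, decomposable NNF in which the outer variables X_O are decided first) representing the theory T = ⋀ᵢ₌₁ⁿ (Xᵢ ↔ Yᵢ) with X_O = {X₁,…,Xₙ} has at least 2ⁿ nodes. -/
import Mathlib


/-- Negation normal form circuits (binary, as terms; sharing is accounted for by
counting distinct subterms). -/
inductive NNF (V : Type) where
  | lit (v : V) (b : Bool)
  | tru
  | fls
  | and (l r : NNF V)
  | or (l r : NNF V)
deriving DecidableEq

namespace NNF

variable {V : Type} [DecidableEq V]

/-- The variables occurring in an NNF. -/
def vars : NNF V → Finset V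
  | .lit v _ => {v}
  | .tru => ∅
  | .fls => ∅
  | .and l r => vars l ∪ vars r
  | .or l r => vars l ∪ vars r

/-- Evaluation of an NNF under a total assignment. -/
def eval (m : V → Bool) : NNF V → Bool
  | .lit v b => m v == b
  | .tru => true
  | .fls => false
  | .and l r => eval m l && eval m r
  | .or l r => eval m l || eval m r

/-- Decomposability: children of and-nodes have disjoint variables. -/
def Decomposable : NNF V → Prop
  | .and l r => Disjoint (vars l) (vars r) ∧ Decomposable l ∧ Decomposable r
  | .or l r => Decomposable l ∧ Decomposable r
  | _ => True

/-- Determinism: children of or-nodes are pairwise logically inconsistent. -/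
def Deterministic : NNF V → Prop
  | .and l r => Deterministic l ∧ Deterministic r
  | .or l r => (∀ m : V → Bool, ¬(eval m l = true ∧ eval m r = true)) ∧
      Deterministic l ∧ Deterministic r
  | _ => True

/-- Smoothness: children of or-nodes mention the same variables. -/
def Smooth : NNF V → Prop
  | .and l r => Smooth l ∧ Smooth r
  | .or l r => vars l = vars r ∧ Smooth l ∧ Smooth r
  | _ => True

/-- A node is pure (w.r.t. the partition `X`, `Xᶜ`) if its variables lie
entirely inside `X` or entirely outside `X`. -/
def Pure (X : Set V) (c : NNF V) : Prop :=
  (↑(vars c) : Set V) ⊆ X ∨ (↑(vars c) : Set V) ⊆ Xᶜ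

/-- `X`-firstness: every and-node either has all children pure, or has one mixed
child while all its other children are pure with variables inside `X`. -/
def XFirst (X : Set V) : NNF V → Prop
  | .and l r => ((Pure X l ∧ Pure X r) ∨
      ((↑(vars l) : Set V) ⊆ X ∧ ¬Pure X r) ∨
      ((↑(vars r) : Set V) ⊆ X ∧ ¬Pure X l)) ∧ XFirst X l ∧ XFirst X r
  | .or l r => XFirst X l ∧ XFirst X r
  | _ => True

/-- The set of distinct subterms of an NNF: its size is the number of nodes of
the circuit viewed as a DAG with maximal sharing. -/
def subterms : NNF V → Finset (NNF V)
  | .lit v b => {.lit v b}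
  | .tru => {.tru}
  | .fls => {.fls}
  | .and l r => insert (.and l r) (subterms l ∪ subterms r)
  | .or l r => insert (.or l r) (subterms l ∪ subterms r)

end NNF

namespace NNF

variable {V : Type} [DecidableEq V]

lemma eval_congr {d : NNF V} {m m' : V → Bool} (h : ∀ v ∈ vars d, m v = m' v) :
    eval m d = eval m' d := by
  induction d with
  | lit v b => simp [eval, h v (by simp [vars])]
  | tru => rfl
  | fls => rfl
  | and l r ihl ihr =>
      simp only [eval]
      rw [ihl (fun v hv => h v (by simp [vars, hv])),
        ihr (fun v hv => h v (by simp [vars, hv]))]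
  | or l r ihl ihr =>
      simp only [eval]
      rw [ihl (fun v hv => h v (by simp [vars, hv])),
        ihr (fun v hv => h v (by simp [vars, hv]))]

lemma mem_subterms_self (d : NNF V) : d ∈ subterms d := by
  cases d <;> simp [subterms]

lemma subterms_and_left {l r e : NNF V} (h : e ∈ subterms l) :
    e ∈ subterms (.and l r) := by simp [subterms]; tauto
lemma subterms_and_right {l r e : NNF V} (h : e ∈ subterms r) :
    e ∈ subterms (.and l r) := by simp [subterms]; tauto
lemma subterms_or_left {l r e : NNF V} (h : e ∈ subterms l) :
    e ∈ subterms (.or l r) := by simp [subterms]; tauto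
lemma subterms_or_right {l r e : NNF V} (h : e ∈ subterms r) :
    e ∈ subterms (.or l r) := by simp [subterms]; tauto

lemma key {X : Set V} : ∀ (d : NNF V), XFirst X d → ∀ (m : V → Bool),
    eval m d = true →
    (∀ m', (∀ v ∈ X, m v = m' v) → eval m' d = true) ∨
    ∃ e ∈ subterms d, (↑(vars e) : Set V) ⊆ Xᶜ ∧ eval m e = true ∧
      ∀ m', (∀ v ∈ X, m v = m' v) → eval m' e = true → eval m' d = true := by
  intro d
  induction d with
  | lit v b =>
      intro _ m hm
      by_cases hv : v ∈ X
      · left; intro m' hm'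
        have : m v = m' v := hm' v hv
        simpa [eval, ← this] using hm
      · right
        refine ⟨.lit v b, mem_subterms_self _, ?_, hm, fun m' _ h => h⟩
        intro w hw
        simp [vars] at hw
        subst hw; exact hv
  | tru => intro _ m _; left; intro m' _; rfl
  | fls => intro _ m hm; simp [eval] at hm
  | and l r ihl ihr =>
      intro hX m hm
      obtain ⟨hml, hmr⟩ : eval m l = true ∧ eval m r = true := by
        simpa [eval, Bool.and_eq_true] using hm
      obtain ⟨hx, hxl, hxr⟩ := hX
      have hcase : (↑(vars l) : Set V) ⊆ X ∨ (↑(vars r) : Set V) ⊆ X ∨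
          ((↑(vars l) : Set V) ⊆ Xᶜ ∧ (↑(vars r) : Set V) ⊆ Xᶜ) := by
        rcases hx with ⟨hpl, hpr⟩ | ⟨h1, _⟩ | ⟨h1, _⟩
        · rcases hpl with h | h
          · exact Or.inl h
          · rcases hpr with h' | h'
            · exact Or.inr (Or.inl h')
            · exact Or.inr (Or.inr ⟨h, h'⟩)
        · exact Or.inl h1
        · exact Or.inr (Or.inl h1)
      rcases hcase with hl | hr | ⟨hl, hr⟩
      · -- vars l ⊆ X
        have hlstable : ∀ m', (∀ v ∈ X, m v = m' v) → eval m' l = true := by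
          intro m' ha
          rw [← eval_congr (fun v hv => ha v (hl hv))]; exact hml
        rcases ihr hxr m hmr with hA | ⟨e, he, hev, hevm, himp⟩
        · left; intro m' ha
          simp [eval, hlstable m' ha, hA m' ha]
        · right
          refine ⟨e, subterms_and_right he, hev, hevm, fun m' ha hee => ?_⟩
          simp [eval, hlstable m' ha, himp m' ha hee]
      · have hrstable : ∀ m', (∀ v ∈ X, m v = m' v) → eval m' r = true := by
          intro m' ha
          rw [← eval_congr (fun v hv => ha v (hr hv))]; exact hmr
        rcases ihl hxl m hml with hA | ⟨e, he, hev, hevm, himp⟩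
        · left; intro m' ha
          simp [eval, hrstable m' ha, hA m' ha]
        · right
          refine ⟨e, subterms_and_left he, hev, hevm, fun m' ha hee => ?_⟩
          simp [eval, hrstable m' ha, himp m' ha hee]
      · right
        refine ⟨.and l r, mem_subterms_self _, ?_, hm, fun m' _ h => h⟩
        intro w hw
        simp [vars] at hw
        rcases hw with hw | hw
        · exact hl (by exact_mod_cast hw)
        · exact hr (by exact_mod_cast hw)
  | or l r ihl ihr =>
      intro hX m hm
      obtain ⟨hxl, hxr⟩ := hX
      have hm' : eval m l = true ∨ eval m r = true := by
        simpa [eval, Bool.or_eq_true] using hm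
      rcases hm' with hml | hmr
      · rcases ihl hxl m hml with hA | ⟨e, he, hev, hevm, himp⟩
        · left; intro m' ha; simp [eval, hA m' ha]
        · right
          exact ⟨e, subterms_or_left he, hev, hevm, fun m' ha hee => by
            simp [eval, himp m' ha hee]⟩
      · rcases ihr hxr m hmr with hA | ⟨e, he, hev, hevm, himp⟩
        · left; intro m' ha; simp [eval, hA m' ha]
        · right
          exact ⟨e, subterms_or_right he, hev, hevm, fun m' ha hee => by
            simp [eval, himp m' ha hee]⟩

end NNF


/-- Any `X_O`-first sd-DNNF representing `T = ⋀ᵢ (Xᵢ ↔ Yᵢ)`, where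
`X_O = {X₁,…,Xₙ}` (the left summands), has at least `2ⁿ` nodes. -/
theorem stmt18 (n : ℕ) (c : NNF (Fin n ⊕ Fin n))
    (hD : NNF.Decomposable c) (hd : NNF.Deterministic c) (hs : NNF.Smooth c)
    (hX : NNF.XFirst (Set.range Sum.inl) c)
    (hrep : ∀ m : Fin n ⊕ Fin n → Bool,
      NNF.eval m c = true ↔ ∀ i : Fin n, m (Sum.inl i) = m (Sum.inr i)) :
    2 ^ n ≤ (NNF.subterms c).card := by
  classical
  rcases Nat.eq_zero_or_pos n with hn | hn
  · subst hn
    simpa using Finset.card_pos.2 ⟨c, NNF.mem_subterms_self c⟩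
  · have hex : ∀ x : Fin n → Bool, ∃ e, e ∈ NNF.subterms c ∧
        (↑(NNF.vars e) : Set (Fin n ⊕ Fin n)) ⊆ (Set.range Sum.inl)ᶜ ∧
        NNF.eval (Sum.elim x x) e = true ∧
        ∀ m', (∀ v ∈ Set.range (Sum.inl : Fin n → Fin n ⊕ Fin n),
            Sum.elim x x v = m' v) →
          NNF.eval m' e = true → NNF.eval m' c = true := by
      intro x
      have hsat : NNF.eval (Sum.elim x x) c = true := (hrep _).2 (fun i => rfl)
      rcases NNF.key c hX (Sum.elim x x) hsat with hA | ⟨e, he, h1, h2, h3⟩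
      · exfalso
        set i : Fin n := ⟨0, hn⟩ with hidef
        set m' : Fin n ⊕ Fin n → Bool :=
          Sum.elim x (fun j => if j = i then !(x i) else x j) with hm'
        have h1 := hA m' (by rintro v ⟨j, rfl⟩; rfl)
        have h2 := (hrep m').1 h1 i
        simp [hm'] at h2
      · exact ⟨e, he, h1, h2, h3⟩
    choose f hf1 hf2 hf3 hf4 using hex
    have hinj : Set.InjOn f (Finset.univ : Finset (Fin n → Bool)) := by
      intro x _ y _ hxy
      by_contra hne
      obtain ⟨i, hi⟩ := Function.ne_iff.1 hne
      have hvy : NNF.eval (Sum.elim y x) (f y) = true := by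
        rw [← hxy]
        rw [← NNF.eval_congr (m := Sum.elim x x) ?_]
        · exact hf3 x
        · intro v hv
          have hvX : v ∈ (Set.range (Sum.inl : Fin n → Fin n ⊕ Fin n))ᶜ :=
            hf2 x (Finset.mem_coe.2 hv)
          rcases v with j | j
          · exact absurd ⟨j, rfl⟩ hvX
          · rfl
      have h4 := hf4 y (Sum.elim y x) (by rintro v ⟨j, rfl⟩; rfl) hvy
      have h5 := (hrep _).1 h4 i
      simp at h5
      exact hi h5.symm
    calc 2 ^ n = (Finset.univ : Finset (Fin n → Bool)).card := by
          rw [Finset.card_univ, Fintype.card_fun, Fintype.card_bool, Fintype.card_fin]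
      _ ≤ (NNF.subterms c).card :=
          Finset.card_le_card_of_injOn f (fun x _ => hf1 x) hinj
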